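/- arXiv:1711.06495 — 5 statements merged into one kernel-verified Lean document; each statement's English description precedes it below -/
import Mathlib

section
/- Let X, Y be real Hilbert spaces, A : X → Y a bounded linear operator, F : X → ℝ ∪ {+∞} convex, positively 1-homogeneous and lower semicontinuous, and let f ∈ Y. Suppose u₁†, u₂† ∈ X both satisfy A u₁† = A u₂† = f and F(u₁†) = F(u₂†). If p ∈ Y is such that A* p ∈ ∂F(u₁†), then A* p ∈ ∂F(u₂†). -/
open RealInnerProductSpace

variable {X Y : Type*} [NormedAddCommGroup X] [InnerProductSpace ℝ X] [CompleteSpace X]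
  [NormedAddCommGroup Y] [InnerProductSpace ℝ Y] [CompleteSpace Y]

def subdiff (F : X → EReal) (x : X) : Set X :=
  {ξ : X | ∀ h : X, ((⟪ξ, h⟫ : ℝ) : EReal) ≤ F (x + h) - F x}

/-- The affine minorant `F u₁ + ⟪ξ, · - u₁⟫` takes the value `F u₂` at `u₂`,
so it supports `F` there as well. -/
theorem mem_subdiff_of_inner_sub_eq_zero {E : Type*} [NormedAddCommGroup E]
    [InnerProductSpace ℝ E] {F : E → EReal} {ξ u₁ u₂ : E}
    (hξ : ξ ∈ subdiff F u₁) (horth : ⟪ξ, u₂ - u₁⟫ = 0) (hF : F u₁ = F u₂) :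
    ξ ∈ subdiff F u₂ := by
  intro h
  have hinner : ⟪ξ, u₂ - u₁ + h⟫ = ⟪ξ, h⟫ := by
    rw [inner_add_right, horth, zero_add]
  have hsum : u₁ + (u₂ - u₁ + h) = u₂ + h := by abel
  simpa only [hinner, hsum, hF] using hξ (u₂ - u₁ + h)

theorem inner_adjoint_apply_sub_eq_zero (A : X →L[ℝ] Y) (p : Y) {u₁ u₂ : X}
    (hA : A u₁ = A u₂) : ⟪ContinuousLinearMap.adjoint A p, u₂ - u₁⟫ = 0 := by
  rw [ContinuousLinearMap.adjoint_inner_left, map_sub, hA, sub_self, inner_zero_right]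

theorem source_condition_independent_general (A : X →L[ℝ] Y) (F : X → EReal)
    (f : Y) (u₁ u₂ : X) (h₁ : A u₁ = f) (h₂ : A u₂ = f) (hF : F u₁ = F u₂)
    (p : Y) (hp : (ContinuousLinearMap.adjoint A) p ∈ subdiff F u₁) :
    (ContinuousLinearMap.adjoint A) p ∈ subdiff F u₂ :=
  mem_subdiff_of_inner_sub_eq_zero hp
    (inner_adjoint_apply_sub_eq_zero A p (h₁.trans h₂.symm)) hF

/-- The source condition set does not depend on the choice of minimal-`F` solution. -/
theorem source_condition_independent (A : X →L[ℝ] Y) (F : X → EReal)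
    (hconv : ∀ x y : X, ∀ t : ℝ, 0 ≤ t → t ≤ 1 →
      F (t • x + (1 - t) • y) ≤ (t : EReal) * F x + ((1 - t : ℝ) : EReal) * F y)
    (hhom : ∀ l : ℝ, 0 < l → ∀ x : X, F (l • x) = (l : EReal) * F x)
    (hlsc : LowerSemicontinuous F)
    (f : Y) (u₁ u₂ : X) (h₁ : A u₁ = f) (h₂ : A u₂ = f) (hF : F u₁ = F u₂)
    (p : Y) (hp : (ContinuousLinearMap.adjoint A) p ∈ subdiff F u₁) :
    (ContinuousLinearMap.adjoint A) p ∈ subdiff F u₂ :=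
  source_condition_independent_general A F f u₁ u₂ h₁ h₂ hF p hp
end

section
/- Let X, Y be real Hilbert spaces, A : X → Y bounded linear, f ∈ Y, α > 0, and F : X → ℝ ∪ {+∞} convex, proper, lower semicontinuous with F(0) = 0 and F positively 1-homogeneous. Suppose u_α minimizes u ↦ (1/2)‖Au − f‖² + α F(u) and p_α maximizes p ↦ ⟨f, p⟩ − (α/2)‖p‖² over { p ∈ Y : A* p ∈ ∂F(0) }, with equality of the optimal values. Then A* p_α ∈ ∂F(u_α) and p_α = (f − A u_α)/α. -/
open RealInnerProductSpace

variable {X Y : Type*} [NormedAddCommGroup X] [InnerProductSpace ℝ X] [CompleteSpace X]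
  [NormedAddCommGroup Y] [InnerProductSpace ℝ Y] [CompleteSpace Y]

lemma aux_small (b r : ℝ) (hb : 0 ≤ b) (h : ∀ t : ℝ, 0 < t → t < 1 → 0 ≤ r + t * b) :
    0 ≤ r := by
  by_contra hr
  push_neg at hr
  set t := min (1/2) (-r / (b + 1)) with htdef
  have hb1 : (0:ℝ) < b + 1 := by linarith
  have ht0 : 0 < t := lt_min (by norm_num) (div_pos (neg_pos.2 hr) hb1)
  have ht1 : t < 1 := lt_of_le_of_lt (min_le_left _ _) (by norm_num)
  have hle : t ≤ -r / (b + 1) := min_le_right _ _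
  have h2 := h t ht0 ht1
  have htb : t * b ≤ (-r / (b + 1)) * b := mul_le_mul_of_nonneg_right hle hb
  have hcancel : -r / (b + 1) * (b + 1) = -r := div_mul_cancel₀ _ (by linarith)
  nlinarith [div_pos (neg_pos.2 hr) hb1]

set_option maxHeartbeats 1000000 in
/-- Extremality relations from Fenchel duality for the Tikhonov-type primal problem
`u ↦ ½‖Au − f‖² + α F(u)` and its dual `p ↦ ⟨f,p⟩ − (α/2)‖p‖²` over `{p : A*p ∈ ∂F(0)}`. -/
theorem extremality_relations (A : X →L[ℝ] Y) (F : X → EReal)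
    (hconv : ∀ x y : X, ∀ t : ℝ, 0 ≤ t → t ≤ 1 →
      F (t • x + (1 - t) • y) ≤ (t : EReal) * F x + ((1 - t : ℝ) : EReal) * F y)
    (hproper : ∃ x, F x ≠ ⊤)
    (hlsc : LowerSemicontinuous F)
    (h0 : F 0 = 0)
    (hhom : ∀ l : ℝ, 0 < l → ∀ x : X, F (l • x) = (l : EReal) * F x)
    (f : Y) (α : ℝ) (hα : 0 < α) (uα : X) (pα : Y)
    (hu : ∀ u : X, ((‖A uα - f‖ ^ 2 / 2 : ℝ) : EReal) + (α : EReal) * F uα ≤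
      ((‖A u - f‖ ^ 2 / 2 : ℝ) : EReal) + (α : EReal) * F u)
    (hpmem : (ContinuousLinearMap.adjoint A) pα ∈ subdiff F 0)
    (hp : ∀ q : Y, (ContinuousLinearMap.adjoint A) q ∈ subdiff F 0 →
      ⟪f, q⟫ - α / 2 * ‖q‖ ^ 2 ≤ ⟪f, pα⟫ - α / 2 * ‖pα‖ ^ 2)
    (heq : ((‖A uα - f‖ ^ 2 / 2 : ℝ) : EReal) + (α : EReal) * F uα =
      ((⟪f, pα⟫ - α / 2 * ‖pα‖ ^ 2 : ℝ) : EReal)) :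
    (ContinuousLinearMap.adjoint A) pα ∈ subdiff F uα ∧ pα = α⁻¹ • (f - A uα) := by
  classical
  set ξ := (ContinuousLinearMap.adjoint A) pα with hξdef
  -- subgradient at 0, simplified
  have hpmem' : ∀ h : X, ((⟪ξ, h⟫ : ℝ) : EReal) ≤ F h := by
    intro h
    have := hpmem h
    rwa [zero_add, h0, sub_zero] at this
  have hbot : ∀ x : X, F x ≠ ⊥ := fun x =>
    ((EReal.bot_lt_coe _).trans_le (hpmem' x)).ne'
  -- F uα is finite
  have hne_top : F uα ≠ ⊤ := by
    intro htop
    rw [htop, EReal.mul_top_of_pos (by exact_mod_cast hα),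
      EReal.add_top_of_ne_bot (EReal.coe_ne_bot _)] at heq
    exact EReal.top_ne_coe _ heq
  set c : ℝ := (F uα).toReal with hcdef
  have hc : F uα = (c : EReal) := (EReal.coe_toReal hne_top (hbot uα)).symm
  set a : Y := A uα with hadef
  set v : Y := f - a with hvdef
  have hva : ‖a - f‖ = ‖v‖ := by rw [hvdef, norm_sub_rev]
  -- real form of heq
  have heqR : ‖v‖ ^ 2 / 2 + α * c = ⟪f, pα⟫ - α / 2 * ‖pα‖ ^ 2 := by
    rw [hc, hva] at heq
    exact_mod_cast heq
  -- real form of hu when F u is known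
  have huR : ∀ (u : X) (d : ℝ), F u ≤ (d : EReal) →
      ‖v‖ ^ 2 / 2 + α * c ≤ ‖A u - f‖ ^ 2 / 2 + α * d := by
    intro u d hd
    have h1 := (hu u).trans (add_le_add le_rfl (by
      calc (α : EReal) * F u ≤ (α : EReal) * (d : EReal) :=
            mul_le_mul_of_nonneg_left hd (by exact_mod_cast hα.le)
          _ = ((α * d : ℝ) : EReal) := by norm_cast))
    rw [hc, hva] at h1
    exact_mod_cast h1
  -- scaling relation: α c = ⟪a, v⟫
  have hscale : ∀ t : ℝ, 0 < t →
      ‖v‖ ^ 2 / 2 + α * c ≤ ‖(t : ℝ) • a - f‖ ^ 2 / 2 + α * (t * c) := by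
    intro t ht
    have hF : F (t • uα) ≤ ((t * c : ℝ) : EReal) := by
      rw [hhom t ht, hc]; norm_cast
    have := huR (t • uα) (t * c) hF
    rwa [map_smul, ← hadef] at this
  have hexp1 : ∀ t : ℝ, ‖(t : ℝ) • a - f‖ ^ 2 =
      ‖v‖ ^ 2 + 2 * (t - 1) * ⟪a, a - f⟫ + (t - 1) ^ 2 * ‖a‖ ^ 2 := by
    intro t
    have : (t : ℝ) • a - f = (a - f) + (t - 1) • a := by
      rw [sub_smul, one_smul]; abel
    rw [this, ← hva]
    rw [norm_add_sq_real, norm_smul, real_inner_smul_right, real_inner_comm]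
    rw [mul_pow, Real.norm_eq_abs, sq_abs]
    ring
  have hK : α * c = ⟪a, f - a⟫ := by
    have key : ∀ s : ℝ, -1 < s → 0 ≤ s * (s * ‖a‖ ^ 2 / 2 + (α * c - ⟪a, f - a⟫)) := by
      intro s hs
      have h1 := hscale (1 + s) (by linarith)
      rw [hexp1 (1 + s)] at h1
      have haf : ⟪a, a - f⟫ = -⟪a, f - a⟫ := by
        rw [← inner_neg_right]; congr 1; abel
      rw [haf] at h1
      nlinarith [h1]
    have h1 : 0 ≤ (α * c - ⟪a, f - a⟫) := by
      apply aux_small (‖a‖ ^ 2 / 2) _ (by positivity)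
      intro t ht0 ht1
      have := key t (by linarith)
      by_contra hcon
      push_neg at hcon
      nlinarith
    have h2 : 0 ≤ -(α * c - ⟪a, f - a⟫) := by
      apply aux_small (‖a‖ ^ 2 / 2) _ (by positivity)
      intro t ht0 ht1
      have := key (-t) (by linarith)
      by_contra hcon
      push_neg at hcon
      nlinarith
    linarith
  -- feasibility of α⁻¹ • v
  have hfeas : (ContinuousLinearMap.adjoint A) (α⁻¹ • v) ∈ subdiff F 0 := by
    intro h
    rw [zero_add, h0, sub_zero]
    rcases eq_or_ne (F h) ⊤ with htop | hne
    · rw [htop]; exact le_top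
    set d : ℝ := (F h).toReal with hddef
    have hd : F h = (d : EReal) := (EReal.coe_toReal hne (hbot h)).symm
    have hkey : ⟪v, A h⟫ ≤ α * d := by
      have hineq : ∀ t : ℝ, 0 < t → t < 1 →
          0 ≤ (α * d - ⟪v, A h⟫) + t * (‖A h‖ ^ 2 / 2) := by
        intro t ht0 ht1
        -- convexity bound : F (uα + t • h) ≤ c + t * d
        have hcb : F (uα + t • h) ≤ ((c + t * d : ℝ) : EReal) := by
          have hco := hconv ((2:ℝ) • uα) ((2*t) • h) (1/2) (by norm_num) (by norm_num)
          have harg : (1/2 : ℝ) • ((2:ℝ) • uα) + ((1 - 1/2 : ℝ)) • ((2*t) • h)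
              = uα + t • h := by
            module
          rw [harg] at hco
          rw [hhom 2 (by norm_num) uα, hhom (2*t) (by linarith) h, hc, hd] at hco
          refine hco.trans (le_of_eq ?_)
          norm_cast
          ring
        have h1 := huR (uα + t • h) (c + t * d) hcb
        have hexp2 : ‖A (uα + t • h) - f‖ ^ 2
            = ‖v‖ ^ 2 - 2 * t * ⟪v, A h⟫ + t ^ 2 * ‖A h‖ ^ 2 := by
          have : A (uα + t • h) - f = -(v - t • A h) := by
            rw [map_add, map_smul, hvdef, hadef]; abel
          rw [this, norm_neg, norm_sub_sq_real, real_inner_smul_right, norm_smul,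
            mul_pow, Real.norm_eq_abs, sq_abs]
          ring
        rw [hexp2] at h1
        nlinarith [h1, mul_pos ht0 ht0]
      have := aux_small (‖A h‖ ^ 2 / 2) (α * d - ⟪v, A h⟫) (by positivity) hineq
      linarith
    have hip : ⟪(ContinuousLinearMap.adjoint A) (α⁻¹ • v), h⟫ = α⁻¹ * ⟪v, A h⟫ := by
      rw [ContinuousLinearMap.adjoint_inner_left, real_inner_smul_left]
    rw [hd, hip]
    have : α⁻¹ * ⟪v, A h⟫ ≤ d := by
      rw [inv_mul_le_iff₀ hα]
      linarith [hkey]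
    exact_mod_cast this
  -- dual optimality against the feasible point
  have hdual := hp (α⁻¹ • v) hfeas
  -- turn everything into real inequalities about inner products
  have hnv : ‖α⁻¹ • v‖ ^ 2 = α⁻¹ ^ 2 * ‖v‖ ^ 2 := by
    rw [norm_smul, mul_pow, Real.norm_eq_abs, sq_abs]
  have hfv : ⟪f, α⁻¹ • v⟫ = α⁻¹ * ⟪f, v⟫ := real_inner_smul_right _ _ _
  have hfvv : ⟪f, v⟫ = ‖v‖ ^ 2 + ⟪a, f - a⟫ := by
    have : f = v + a := by rw [hvdef]; abel
    nth_rewrite 1 [this]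
    rw [inner_add_left, real_inner_self_eq_norm_sq]
  rw [hnv, hfv, hfvv, ← hK] at hdual
  -- hdual : α⁻¹ * (‖v‖^2 + α*c) - α/2 * (α⁻¹^2 * ‖v‖^2) ≤ ⟪f,pα⟫ - α/2‖pα‖^2
  have hP : α⁻¹ * (‖v‖ ^ 2 + α * c) - α / 2 * (α⁻¹ ^ 2 * ‖v‖ ^ 2)
      = α⁻¹ * (‖v‖ ^ 2 / 2 + α * c) := by
    field_simp; ring
  rw [hP, ← heqR] at hdual
  -- hdual : α⁻¹ * P ≤ P where P = ‖v‖²/2 + α c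
  have hdual' : ‖v‖ ^ 2 / 2 + α * c ≤ α * (‖v‖ ^ 2 / 2 + α * c) := by
    have := mul_le_mul_of_nonneg_left hdual (le_of_lt hα)
    rwa [← mul_assoc, mul_inv_cancel₀ hα.ne', one_mul] at this
  -- subgradient inequality at uα-direction
  have h3 : ⟪pα, a⟫ ≤ c := by
    have := hpmem' uα
    rw [hc, hξdef, ContinuousLinearMap.adjoint_inner_left] at this
    exact_mod_cast this
  -- decompose ⟪f, pα⟫
  have hfp : ⟪f, pα⟫ = ⟪v, pα⟫ + ⟪pα, a⟫ := by
    have : f = v + a := by rw [hvdef]; abel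
    rw [this, inner_add_left, real_inner_comm a pα]
  rw [hfp] at heqR
  -- norm expansion for v - α • pα
  have hS : ‖v - α • pα‖ ^ 2 = ‖v‖ ^ 2 - 2 * (α * ⟪v, pα⟫) + α ^ 2 * ‖pα‖ ^ 2 := by
    rw [norm_sub_sq_real, real_inner_smul_right, norm_smul, mul_pow, Real.norm_eq_abs, sq_abs]
  -- key identity + signs force everything
  have hID : ‖v - α • pα‖ ^ 2 / 2 + α * (c - ⟪pα, a⟫)
      = (1 - α) * (‖v‖ ^ 2 / 2 + α * c) := by
    rw [hS]; linear_combination α * heqR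
  have hT : 0 ≤ α * (c - ⟪pα, a⟫) := mul_nonneg hα.le (by linarith)
  have hPneg : (1 - α) * (‖v‖ ^ 2 / 2 + α * c) ≤ 0 := by nlinarith [hdual']
  have hS0 : ‖v - α • pα‖ ^ 2 ≤ 0 := by linarith [hID, hT, hPneg]
  have hc2 : c ≤ ⟪pα, a⟫ := by nlinarith [hID, hPneg, sq_nonneg ‖v - α • pα‖, hα]
  have hSz : ‖v - α • pα‖ ^ 2 = 0 ∧ c = ⟪pα, a⟫ :=
    ⟨le_antisymm hS0 (sq_nonneg _), le_antisymm hc2 h3⟩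
  have hveq : v = α • pα := by
    have := hSz.1
    rw [pow_eq_zero_iff (by norm_num), norm_eq_zero, sub_eq_zero] at this
    exact this
  have hpeq : pα = α⁻¹ • (f - A uα) := by
    rw [← hadef, ← hvdef, hveq, smul_smul, inv_mul_cancel₀ hα.ne', one_smul]
  refine ⟨?_, hpeq⟩
  -- subdifferential at uα
  intro h
  rw [hc]
  have hsum := hpmem' (uα + h)
  have hξu : ⟪ξ, uα⟫ = c := by
    rw [hξdef, ContinuousLinearMap.adjoint_inner_left, ← hadef]
    exact hSz.2.symm
  rcases eq_or_ne (F (uα + h)) ⊤ with htop | hne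
  · rw [htop, EReal.top_sub_coe]
    exact le_top
  set e : ℝ := (F (uα + h)).toReal with hedef
  have he : F (uα + h) = (e : EReal) := (EReal.coe_toReal hne (hbot _)).symm
  rw [he] at hsum ⊢
  have hsumR : ⟪ξ, uα + h⟫ ≤ e := by exact_mod_cast hsum
  rw [inner_add_right, hξu] at hsumR
  rw [← EReal.coe_sub]
  exact_mod_cast (by linarith : ⟪ξ, h⟫ ≤ e - c)
end

section
/- Let X and Y be real Hilbert spaces, A : X → Y bounded linear, f ∈ Y, and F : X → ℝ ∪ {+∞} convex, proper, lower semicontinuous, positively 1-homogeneous. Let u† ∈ X satisfy A u† = f with F(u†) minimal among solutions. If the source condition holds, i.e., there exists p₀ ∈ Y with A* p₀ ∈ ∂F(u†), then p₀ maximizes p ↦ ⟨p, f⟩ over { p ∈ Y : A* p ∈ ∂F(0) }. Conversely, if p₀ maximizes ⟨·, f⟩ over { p : A* p ∈ ∂F(0) } and additionally ⟨A* p₀, u†⟩ = F(u†), then A* p₀ ∈ ∂F(u†). -/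
open RealInnerProductSpace

variable {X Y : Type*} [NormedAddCommGroup X] [InnerProductSpace ℝ X] [CompleteSpace X]
  [NormedAddCommGroup Y] [InnerProductSpace ℝ Y] [CompleteSpace Y]

private lemma ereal_le_sub_of_add_le {a r : ℝ} {b : EReal} (h : ((a + r : ℝ) : EReal) ≤ b) :
    (a : EReal) ≤ b - (r : EReal) := by
  induction b using EReal.rec with
  | bot => exact absurd h (by simp)
  | coe x =>
    rw [← EReal.coe_sub]
    exact EReal.coe_le_coe_iff.mpr (by linarith [EReal.coe_le_coe_iff.mp h])
  | top => rw [EReal.top_sub_coe]; exact le_top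

private lemma ereal_le_of_sub_le {a r : ℝ} {b : EReal} (h : ((a - r : ℝ) : EReal) ≤ b - (r : EReal)) :
    (a : EReal) ≤ b := by
  induction b using EReal.rec with
  | bot =>
    rw [show (⊥ : EReal) - (r : EReal) = ⊥ by simp] at h
    exact absurd (le_bot_iff.mp h) (EReal.coe_ne_bot _)
  | coe x =>
    rw [← EReal.coe_sub] at h
    exact EReal.coe_le_coe_iff.mpr (by linarith [EReal.coe_le_coe_iff.mp h])
  | top => exact le_top

/-- Membership in the subdifferential forces finiteness of `F x`. -/
private lemma finite_of_mem_subdiff {F : X → EReal} {x ξ : X} (h : ξ ∈ subdiff F x) :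
    ∃ r : ℝ, F x = (r : EReal) := by
  have h0 := h 0
  simp only [inner_zero_right, add_zero, EReal.coe_zero] at h0
  have hnt : F x ≠ ⊤ := by intro ht; rw [ht] at h0; simp at h0
  have hnb : F x ≠ ⊥ := by intro hb; rw [hb] at h0; simp at h0
  exact ⟨(F x).toReal, (EReal.coe_toReal hnt hnb).symm⟩

/-- Equivalence between the source condition and maximizers of the limit dual problem. -/
theorem source_condition_iff_dual_maximizer (A : X →L[ℝ] Y) (F : X → EReal)
    (hconv : ∀ x y : X, ∀ t : ℝ, 0 ≤ t → t ≤ 1 →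
      F (t • x + (1 - t) • y) ≤ (t : EReal) * F x + ((1 - t : ℝ) : EReal) * F y)
    (hproper : ∃ x, F x ≠ ⊤)
    (hlsc : LowerSemicontinuous F)
    (hhom : ∀ l : ℝ, 0 < l → ∀ x : X, F (l • x) = (l : EReal) * F x)
    (f : Y) (udag : X) (hudag : A udag = f)
    (hmin : ∀ u : X, A u = f → F udag ≤ F u) :
    (∀ p₀ : Y, (ContinuousLinearMap.adjoint A) p₀ ∈ subdiff F udag →
      (ContinuousLinearMap.adjoint A) p₀ ∈ subdiff F 0 ∧
      ∀ q : Y, (ContinuousLinearMap.adjoint A) q ∈ subdiff F 0 → ⟪q, f⟫ ≤ ⟪p₀, f⟫) ∧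
    (∀ p₀ : Y, (ContinuousLinearMap.adjoint A) p₀ ∈ subdiff F 0 →
      (∀ q : Y, (ContinuousLinearMap.adjoint A) q ∈ subdiff F 0 → ⟪q, f⟫ ≤ ⟪p₀, f⟫) →
      ((⟪(ContinuousLinearMap.adjoint A) p₀, udag⟫ : ℝ) : EReal) = F udag →
      (ContinuousLinearMap.adjoint A) p₀ ∈ subdiff F udag) := by
  constructor
  · -- forward direction
    intro p₀ hp₀
    set ξ : X := (ContinuousLinearMap.adjoint A) p₀ with hξdef
    obtain ⟨r, hr⟩ := finite_of_mem_subdiff hp₀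
    -- ⟪ξ, udag⟫ = r
    have hle : ⟪ξ, udag⟫ ≤ r := by
      have h1 := hp₀ udag
      rw [← two_smul ℝ udag, hhom 2 (by norm_num), hr,
        show ((2:ℝ) : EReal) * (r : EReal) = (((2:ℝ)*r : ℝ) : EReal) from (EReal.coe_mul 2 r).symm,
        ← EReal.coe_sub] at h1
      have := EReal.coe_le_coe_iff.mp h1
      linarith
    have hge : r ≤ ⟪ξ, udag⟫ := by
      have h1 := hp₀ (-((1/2 : ℝ) • udag))
      have heq : udag + -((1/2 : ℝ) • udag) = (1/2 : ℝ) • udag := by module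
      rw [heq, hhom (1/2) (by norm_num), hr,
        show ((1/2:ℝ) : EReal) * (r : EReal) = (((1/2:ℝ)*r : ℝ) : EReal) from (EReal.coe_mul _ r).symm,
        ← EReal.coe_sub] at h1
      have h2 := EReal.coe_le_coe_iff.mp h1
      rw [inner_neg_right, real_inner_smul_right] at h2
      linarith
    have hinner : ⟪ξ, udag⟫ = r := le_antisymm hle hge
    -- F 0 = 0
    have hF0nb : F 0 ≠ ⊥ := by
      intro hb
      have h1 := hp₀ (-udag)
      rw [show udag + -udag = (0 : X) by abel, hb] at h1
      simp at h1
    have hF0nt : F 0 ≠ ⊤ := by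
      intro ht
      have hy : ((|r| : ℝ) : EReal) < F 0 := by rw [ht]; exact EReal.coe_lt_top _
      have hev := hlsc 0 _ hy
      have htend : Filter.Tendsto (fun n : ℕ => (1 / ((n:ℝ) + 1)) • udag)
          Filter.atTop (nhds (0 : X)) := by
        have := (tendsto_one_div_add_atTop_nhds_zero_nat (𝕜 := ℝ)).smul_const udag
        simpa using this
      obtain ⟨n, hn⟩ := (htend.eventually hev).exists
      rw [hhom (1 / ((n:ℝ) + 1)) (by positivity), hr,
        show ((1/((n:ℝ)+1):ℝ) : EReal) * (r : EReal) = (((1/((n:ℝ)+1))*r : ℝ) : EReal)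
          from (EReal.coe_mul _ r).symm] at hn
      have h2 := EReal.coe_lt_coe_iff.mp hn
      have h3 : (0:ℝ) < 1 / ((n:ℝ) + 1) := by positivity
      have h4 : 1 / ((n:ℝ) + 1) ≤ 1 := by
        rw [div_le_one (by positivity)]; linarith [Nat.cast_nonneg (α := ℝ) n]
      nlinarith [le_abs_self r, neg_abs_le r, abs_nonneg r]
    obtain ⟨c, hc⟩ : ∃ c : ℝ, F 0 = (c : EReal) :=
      ⟨(F 0).toReal, (EReal.coe_toReal hF0nt hF0nb).symm⟩
    have hF0 : F 0 = 0 := by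
      have h1 := hhom 2 (by norm_num) 0
      rw [smul_zero, hc, show ((2:ℝ) : EReal) * (c : EReal) = (((2:ℝ)*c : ℝ) : EReal)
        from (EReal.coe_mul 2 c).symm] at h1
      have h2 := EReal.coe_eq_coe_iff.mp h1
      rw [hc]
      norm_cast
      linarith
    have hmem0 : ξ ∈ subdiff F 0 := by
      intro h
      rw [zero_add, hF0, sub_zero]
      have h1 := hp₀ (h - udag)
      rw [show udag + (h - udag) = h by abel, hr] at h1
      rw [inner_sub_right, hinner] at h1
      exact ereal_le_of_sub_le h1
    refine ⟨hmem0, ?_⟩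
    intro q hq
    have h1 := hq udag
    rw [zero_add, hF0, sub_zero, hr] at h1
    have h2 := EReal.coe_le_coe_iff.mp h1
    have e1 : ⟪q, f⟫ = ⟪(ContinuousLinearMap.adjoint A) q, udag⟫ := by
      rw [ContinuousLinearMap.adjoint_inner_left, hudag]
    have e2 : ⟪p₀, f⟫ = ⟪ξ, udag⟫ := by
      rw [hξdef, ContinuousLinearMap.adjoint_inner_left, hudag]
    rw [e1, e2, hinner]; exact h2
  · -- converse direction
    intro p₀ hp₀ _hmax hvaleq
    set ξ : X := (ContinuousLinearMap.adjoint A) p₀ with hξdef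
    obtain ⟨c, hc⟩ := finite_of_mem_subdiff hp₀
    have hF0 : F 0 = 0 := by
      have h1 := hhom 2 (by norm_num) 0
      rw [smul_zero, hc, show ((2:ℝ) : EReal) * (c : EReal) = (((2:ℝ)*c : ℝ) : EReal)
        from (EReal.coe_mul 2 c).symm] at h1
      have h2 := EReal.coe_eq_coe_iff.mp h1
      rw [hc]; norm_cast; linarith
    set r : ℝ := ⟪ξ, udag⟫ with hrdef
    intro h
    have h1 := hp₀ (udag + h)
    rw [zero_add, hF0, sub_zero, inner_add_right, ← hrdef] at h1
    rw [← hvaleq]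
    exact ereal_le_sub_of_add_le (by rwa [add_comm] at h1)
end

section
/- Let Y be a real Hilbert space, K ⊆ Y nonempty convex and closed, and f ∈ Y. Suppose the set M of maximizers of p ↦ ⟨f, p⟩ over K is nonempty. For α > 0 let p_α be the unique maximizer over K of D_α(p) = ⟨f, p⟩ − (α/2)‖p‖². Then as α → 0⁺, p_α converges strongly in Y to the unique element of M of minimal norm. -/
/-!
Completing the square, `⟪f, q⟫ - α / 2 * ‖q‖ ^ 2 = α / 2 * (‖α⁻¹ • f‖ ^ 2 - ‖α⁻¹ • f - q‖ ^ 2)`,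
so `p_α` is the projection of `α⁻¹ • f` onto `K`, and the obtuse-angle property of projections
makes the objective drop quadratically away from `p_α`. Comparing the optimality of `p_α` and
`p_β` for `0 ≤ α < β` (with `p_0 = p_m`) gives `‖p_α - p_β‖² ≤ ‖p_α‖² - ‖p_β‖²`. Hence `‖p_α‖²`
increases as `α ↓ 0` and is bounded by `‖p_m‖²`, so `p_α` is Cauchy; its limit `q` maximizes
`⟪f, ·⟫` over `K`, and `‖p_m - q‖² ≤ ‖p_m‖² - ‖q‖² ≤ 0` by minimality of `‖p_m‖`.
-/

open RealInnerProductSpace Filter Topology Set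

theorem exists_tendsto_nhdsGT_of_dist_sq_le {X : Type*} [PseudoMetricSpace X] [CompleteSpace X]
    {p : ℝ → X} {g : ℝ → ℝ} {c : ℝ} (hg : BddAbove (g '' Ioi c))
    (h : ∀ a b, c < a → a < b → dist (p a) (p b) ^ 2 ≤ g a - g b) :
    ∃ q, Tendsto p (𝓝[>] c) (𝓝 q) := by
  have hdist : ∀ a b, c < a → c < b → dist (p a) (p b) ^ 2 ≤ |g a - g b| := by
    intro a b ha hb
    rcases lt_trichotomy a b with hab | rfl | hab
    · exact (h a b ha hab).trans (le_abs_self _)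
    · simp
    · rw [dist_comm, abs_sub_comm]
      exact (h b a hb hab).trans (le_abs_self _)
  have hanti : AntitoneOn g (Ioi c) := fun a ha b _ hab => by
    rcases hab.lt_or_eq with hab | rfl
    · linarith [h a b ha hab, sq_nonneg (dist (p a) (p b))]
    · rfl
  have hgL := hanti.tendsto_nhdsGT hg
  have hgap : Tendsto (fun x : ℝ × ℝ => √|g x.1 - g x.2|) (𝓝[>] c ×ˢ 𝓝[>] c) (𝓝 0) := by
    simpa using (((hgL.comp tendsto_fst).sub (hgL.comp tendsto_snd)).abs).sqrt
  refine cauchy_map_iff_exists_tendsto.mp (cauchy_map_iff'.mpr ?_)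
  rw [tendsto_uniformity_iff_dist_tendsto_zero]
  refine squeeze_zero' (Eventually.of_forall fun _ => dist_nonneg) ?_ hgap
  filter_upwards [prod_mem_prod self_mem_nhdsWithin self_mem_nhdsWithin] with x hx
  exact Real.le_sqrt_of_sq_le (hdist x.1 x.2 hx.1 hx.2)

section InnerProductSpace

variable {E : Type*} [NormedAddCommGroup E] [InnerProductSpace ℝ E]

theorem Convex.norm_sub_sq_add_norm_sub_sq_le {K : Set E} (hK : Convex ℝ K) {u p w : E}
    (hp : p ∈ K) (hmin : ∀ q ∈ K, ‖u - p‖ ≤ ‖u - q‖) (hw : w ∈ K) :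
    ‖u - p‖ ^ 2 + ‖w - p‖ ^ 2 ≤ ‖u - w‖ ^ 2 := by
  have : Nonempty K := ⟨⟨p, hp⟩⟩
  have hinf : ‖u - p‖ = ⨅ q : K, ‖u - q‖ :=
    le_antisymm (le_ciInf fun q => hmin q q.2)
      (ciInf_le (f := fun q : K => ‖u - q‖) ⟨0, by rintro _ ⟨q, rfl⟩; positivity⟩ ⟨p, hp⟩)
  have hobtuse := (norm_eq_iInf_iff_real_inner_le_zero hK hp).mp hinf w hw
  rw [show u - w = (u - p) - (w - p) by abel, norm_sub_sq_real (u - p)]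
  linarith

/-- The paper's `D_α`. -/
noncomputable def dualObjective (f : E) (α : ℝ) (q : E) : ℝ := ⟪f, q⟫ - α / 2 * ‖q‖ ^ 2

variable {f : E} {K : Set E}

@[simp]
theorem dualObjective_zero : dualObjective f 0 = fun q => ⟪f, q⟫ := by
  ext q
  simp [dualObjective]

theorem dualObjective_eq {α : ℝ} (hα : α ≠ 0) (q : E) :
    dualObjective f α q = α / 2 * (‖α⁻¹ • f‖ ^ 2 - ‖α⁻¹ • f - q‖ ^ 2) := by
  rw [dualObjective, norm_sub_sq_real, real_inner_smul_left]
  field_simp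
  ring

theorem dualObjective_add_le_of_isMaxOn (hK : Convex ℝ K) {α : ℝ} (hα : 0 < α) {p w : E}
    (hp : p ∈ K) (hmax : IsMaxOn (dualObjective f α) K p) (hw : w ∈ K) :
    dualObjective f α w + α / 2 * ‖w - p‖ ^ 2 ≤ dualObjective f α p := by
  have hproj : ∀ q ∈ K, ‖α⁻¹ • f - p‖ ≤ ‖α⁻¹ • f - q‖ := fun q hq => by
    have hq := hmax hq
    rw [Set.mem_ofPred_eq, dualObjective_eq hα.ne', dualObjective_eq hα.ne'] at hq
    exact (pow_le_pow_iff_left₀ (norm_nonneg _) (norm_nonneg _) two_ne_zero).mp (by nlinarith)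
  have := hK.norm_sub_sq_add_norm_sub_sq_le hp hproj hw
  rw [dualObjective_eq hα.ne', dualObjective_eq hα.ne']
  nlinarith

theorem norm_sub_sq_le_of_isMaxOn_dualObjective (hK : Convex ℝ K) {α β : ℝ} (hα : 0 ≤ α)
    (hαβ : α < β) {p p' : E} (hp : p ∈ K) (hp' : p' ∈ K)
    (hmax : IsMaxOn (dualObjective f α) K p) (hmax' : IsMaxOn (dualObjective f β) K p') :
    ‖p - p'‖ ^ 2 ≤ ‖p‖ ^ 2 - ‖p'‖ ^ 2 := by
  have hβ := dualObjective_add_le_of_isMaxOn hK (hα.trans_lt hαβ) hp' hmax' hp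
  have hα' : dualObjective f α p' ≤ dualObjective f α p := hmax hp'
  simp only [dualObjective] at hβ hα'
  nlinarith [sq_nonneg ‖p - p'‖]

theorem dualObjective_le_of_tendsto {p : ℝ → E} {q w : E} (hpq : Tendsto p (𝓝[>] 0) (𝓝 q))
    (hmax : ∀ α > 0, IsMaxOn (dualObjective f α) K (p α)) (hw : w ∈ K) :
    dualObjective f 0 w ≤ dualObjective f 0 q := by
  have hcont : Continuous fun x : ℝ × E => dualObjective f x.1 x.2 := by
    unfold dualObjective
    fun_prop
  have hid : Tendsto (fun α : ℝ => α) (𝓝[>] 0) (𝓝 0) := nhdsWithin_le_nhds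
  refine le_of_tendsto_of_tendsto ((hcont.tendsto _).comp (hid.prodMk_nhds tendsto_const_nhds))
    ((hcont.tendsto _).comp (hid.prodMk_nhds hpq)) ?_
  filter_upwards [self_mem_nhdsWithin] with α hα
  exact hmax α hα hw

end InnerProductSpace

variable {Y : Type*} [NormedAddCommGroup Y] [InnerProductSpace ℝ Y] [CompleteSpace Y]

theorem dual_variables_converge_general (K : Set Y) (hconv : Convex ℝ K)
    (hclosed : IsClosed K) (f : Y)
    (M : Set Y) (hM : M = {p ∈ K | ∀ q ∈ K, ⟪f, q⟫ ≤ ⟪f, p⟫})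
    (pm : Y) (hpm : pm ∈ M) (hmin : ∀ q ∈ M, ‖pm‖ ≤ ‖q‖)
    (p : ℝ → Y)
    (hp : ∀ α : ℝ, 0 < α → p α ∈ K ∧ ∀ q ∈ K,
      ⟪f, q⟫ - α / 2 * ‖q‖ ^ 2 ≤ ⟪f, p α⟫ - α / 2 * ‖p α‖ ^ 2) :
    Filter.Tendsto p (nhdsWithin 0 (Set.Ioi 0)) (nhds pm) := by
  subst hM
  obtain ⟨hpmK, hpmMax⟩ := hpm
  have hpmD : IsMaxOn (dualObjective f 0) K pm := fun q hq => by simpa using hpmMax q hq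
  have hpD (α : ℝ) (hα : 0 < α) : IsMaxOn (dualObjective f α) K (p α) := (hp α hα).2
  have hpm_sub (α : ℝ) (hα : 0 < α) : ‖pm - p α‖ ^ 2 ≤ ‖pm‖ ^ 2 - ‖p α‖ ^ 2 :=
    norm_sub_sq_le_of_isMaxOn_dualObjective hconv le_rfl hα hpmK (hp α hα).1 hpmD (hpD α hα)
  obtain ⟨q, hq⟩ : ∃ q, Tendsto p (𝓝[>] 0) (𝓝 q) := by
    refine exists_tendsto_nhdsGT_of_dist_sq_le (g := fun α => ‖p α‖ ^ 2) ⟨‖pm‖ ^ 2, ?_⟩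
      fun a b ha hab => ?_
    · rintro _ ⟨α, hα, rfl⟩
      linarith [hpm_sub α hα, sq_nonneg ‖pm - p α‖]
    · rw [dist_eq_norm]
      exact norm_sub_sq_le_of_isMaxOn_dualObjective hconv ha.le hab (hp a ha).1
        (hp b (ha.trans hab)).1 (hpD a ha) (hpD b (ha.trans hab))
  have hqK : q ∈ K := hclosed.mem_of_tendsto hq <| by
    filter_upwards [self_mem_nhdsWithin] with α hα using (hp α hα).1
  have hqMax : ∀ w ∈ K, ⟪f, w⟫ ≤ ⟪f, q⟫ := fun w hw => by
    simpa using dualObjective_le_of_tendsto hq hpD hw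
  have hpm_q : ‖pm - q‖ ^ 2 ≤ ‖pm‖ ^ 2 - ‖q‖ ^ 2 := by
    refine le_of_tendsto_of_tendsto ((tendsto_const_nhds.sub hq).norm.pow 2)
      (tendsto_const_nhds.sub (hq.norm.pow 2)) ?_
    filter_upwards [self_mem_nhdsWithin] with α hα using hpm_sub α hα
  have hpm_le_q : ‖pm‖ ≤ ‖q‖ := hmin q ⟨hqK, hqMax⟩
  obtain rfl : pm = q := by
    rw [← sub_eq_zero, ← norm_eq_zero]
    nlinarith [norm_nonneg (pm - q), norm_nonneg pm]
  exact hq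

/-- Convergence of the dual variables: as `α → 0⁺`, the maximizer `p_α` of
`D_α(p) = ⟨f, p⟩ − (α/2)‖p‖²` over `K` converges strongly to the minimal-norm element of
the set `M` of maximizers of `⟨f, ·⟩` over `K`. -/
theorem dual_variables_converge (K : Set Y) (hK : K.Nonempty) (hconv : Convex ℝ K)
    (hclosed : IsClosed K) (f : Y)
    (M : Set Y) (hM : M = {p ∈ K | ∀ q ∈ K, ⟪f, q⟫ ≤ ⟪f, p⟫}) (hMne : M.Nonempty)
    (pm : Y) (hpm : pm ∈ M) (hmin : ∀ q ∈ M, ‖pm‖ ≤ ‖q‖)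
    (p : ℝ → Y)
    (hp : ∀ α : ℝ, 0 < α → p α ∈ K ∧ ∀ q ∈ K,
      ⟪f, q⟫ - α / 2 * ‖q‖ ^ 2 ≤ ⟪f, p α⟫ - α / 2 * ‖p α‖ ^ 2) :
    Filter.Tendsto p (nhdsWithin 0 (Set.Ioi 0)) (nhds pm) :=
  dual_variables_converge_general K hconv hclosed f M hM pm hpm hmin p hp
end

section
/- Let E_n, F be measurable subsets of ℝ², all contained in a fixed ball B(0,R), with |E_n Δ F| → 0. Suppose there exist constants C > 0 and r₀ > 0, independent of n, such that for all n, all r < r₀ and all x ∈ ∂E_n (the topological boundary), |B(x,r) ∩ E_n| ≥ C |B(x,r)| and |B(x,r) \ E_n| ≥ C |B(x,r)|; and likewise for F. Then sup_{x ∈ E_n} d(x, F) → 0; in particular if the density estimates hold symmetrically, d_H(E_n, F) → 0 for the Hausdorff distance between suitable representatives. -/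
open MeasureTheory Metric

noncomputable section

abbrev E2 := EuclideanSpace ℝ (Fin 2)

/-- The uniform interior/exterior density estimates for a set at all its boundary points. -/
def DensityEstimates (E : Set E2) (C r₀ : ℝ) : Prop :=
  ∀ r : ℝ, 0 < r → r < r₀ → ∀ x ∈ frontier E,
    ENNReal.ofReal C * volume (ball x r) ≤ volume (ball x r ∩ E) ∧
    ENNReal.ofReal C * volume (ball x r) ≤ volume (ball x r \ E)

/-!
A point `x ∈ E n` far from `F`, say `infDist x F ≥ 2r`, forces a definite amount of `E n \ F`:
either `ball x r ⊆ E n`, or the point `z` of `∂(E n)` nearest to `x` lies in that ball, and there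
the interior density estimate gives `|ball z r ∩ E n| ≥ C |ball z r|`. In both cases this mass lies
in `ball x (2r)`, which misses `F`, so `|E n \ F| ≳ min C 1 · r²`. Since `|E n Δ F| → 0`, points
of `E n` are eventually close to `F`, and symmetrically with the density estimates for `F`.
-/

namespace DensityEstimates

variable {A B : Set E2} {C r₀ r : ℝ}

lemma exists_dist_lt_density_le (hdens : DensityEstimates A C r₀) (hr : 0 < r) (hrr₀ : r < r₀)
    {x : E2} (hx : x ∈ A) :
    ∃ z, dist x z < r ∧
      ENNReal.ofReal (min C 1) * volume (ball (0 : E2) r) ≤ volume (ball z r ∩ A) := by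
  by_cases hball : ball x r ⊆ A
  · refine ⟨x, by simpa using hr, ?_⟩
    rw [Set.inter_eq_left.2 hball, Measure.addHaar_ball_center volume x r]
    exact mul_le_of_le_one_left' (ENNReal.ofReal_le_one.2 (min_le_right _ _))
  · obtain ⟨y, hy, hyA⟩ := Set.not_subset.1 hball
    obtain ⟨z, hz, hxz⟩ :=
      exists_mem_frontier_infDist_compl_eq_dist hx (Set.ne_univ_iff_exists_notMem _ |>.2 ⟨y, hyA⟩)
    refine ⟨z, ?_, ?_⟩
    · rw [← hxz]
      exact (infDist_le_dist_of_mem hyA).trans_lt (mem_ball'.1 hy)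
    · calc ENNReal.ofReal (min C 1) * volume (ball (0 : E2) r)
          ≤ ENNReal.ofReal C * volume (ball z r) := by
            rw [Measure.addHaar_ball_center volume z r]
            gcongr
            exact min_le_left _ _
        _ ≤ volume (ball z r ∩ A) := (hdens r hr hrr₀ z hz).1

lemma density_le_volume_diff (hdens : DensityEstimates A C r₀) (hr : 0 < r) (hrr₀ : r < r₀)
    {x : E2} (hx : x ∈ A) (hxB : 2 * r ≤ infDist x B) :
    ENNReal.ofReal (min C 1) * volume (ball (0 : E2) r) ≤ volume (A \ B) := by
  obtain ⟨z, hxz, hz⟩ := hdens.exists_dist_lt_density_le hr hrr₀ hx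
  refine hz.trans (measure_mono fun w ⟨hwz, hwA⟩ => ⟨hwA, fun hwB => ?_⟩)
  have := infDist_le_dist_of_mem (x := x) hwB
  have := dist_triangle x z w
  rw [mem_ball'] at hwz
  linarith

end DensityEstimates

lemma eventually_forall_infDist_le {ι : Type*} {l : Filter ι} {A B : ι → Set E2} {C r₀ : ℝ}
    (hdens : ∀ i, DensityEstimates (A i) C r₀) (hC : 0 < C) (hr₀ : 0 < r₀)
    (hvol : Filter.Tendsto (fun i => volume (A i \ B i)) l (nhds 0)) {ε : ℝ} (hε : 0 < ε) :
    ∀ᶠ i in l, ∀ x ∈ A i, infDist x (B i) ≤ ε := by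
  set r := min (ε / 2) (r₀ / 2)
  have hr : 0 < r := lt_min (half_pos hε) (half_pos hr₀)
  have hrr₀ : r < r₀ := (min_le_right _ _).trans_lt (half_lt_self hr₀)
  have hδ : 0 < ENNReal.ofReal (min C 1) * volume (ball (0 : E2) r) :=
    ENNReal.mul_pos (ENNReal.ofReal_pos.2 (lt_min hC one_pos)).ne' (measure_ball_pos _ _ hr).ne'
  filter_upwards [hvol.eventually_lt_const hδ] with i hi x hx
  by_contra! hfar
  have h2r : 2 * r ≤ infDist x (B i) := by linarith [min_le_left (ε / 2) (r₀ / 2)]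
  exact ((hdens i).density_le_volume_diff hr hrr₀ hx h2r).not_gt hi

lemma tendsto_zero_of_nonneg_of_eventually_le {ι : Type*} {l : Filter ι} {f : ι → ℝ}
    (h0 : ∀ i, 0 ≤ f i) (h : ∀ ε > 0, ∀ᶠ i in l, f i ≤ ε) : Filter.Tendsto f l (nhds 0) :=
  Metric.tendsto_nhds.2 fun ε hε => (h (ε / 2) (half_pos hε)).mono fun i hi => by
    rw [Real.dist_0_eq_abs, abs_of_nonneg (h0 i)]
    linarith

theorem hausdorff_convergence_of_L1_and_density_general
    (E : ℕ → Set E2) (F : Set E2)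
    (hL1 : Filter.Tendsto (fun n => volume (symmDiff (E n) F)) Filter.atTop (nhds 0))
    (C r₀ : ℝ) (hC : 0 < C) (hr₀ : 0 < r₀)
    (hdensE : ∀ n, DensityEstimates (E n) C r₀) (hdensF : DensityEstimates F C r₀) :
    Filter.Tendsto (fun n => ⨆ x ∈ E n, infDist x F) Filter.atTop (nhds 0) ∧
    Filter.Tendsto (fun n => hausdorffDist (E n) F) Filter.atTop (nhds 0) := by
  have hEF : Filter.Tendsto (fun n => volume (E n \ F)) Filter.atTop (nhds 0) :=
    tendsto_of_tendsto_of_tendsto_of_le_of_le tendsto_const_nhds hL1 (fun _ => bot_le)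
      fun n => measure_mono (le_sup_left.trans_eq (symmDiff_def (E n) F).symm)
  have hFE : Filter.Tendsto (fun n => volume (F \ E n)) Filter.atTop (nhds 0) :=
    tendsto_of_tendsto_of_tendsto_of_le_of_le tendsto_const_nhds hL1 (fun _ => bot_le)
      fun n => measure_mono (le_sup_right.trans_eq (symmDiff_def (E n) F).symm)
  have hE ε (hε : 0 < ε) := eventually_forall_infDist_le hdensE hC hr₀ hEF hε
  have hF ε (hε : 0 < ε) := eventually_forall_infDist_le (fun _ => hdensF) hC hr₀ hFE hε
  refine ⟨tendsto_zero_of_nonneg_of_eventually_le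
      (fun n => Real.iSup_nonneg fun x => Real.iSup_nonneg fun _ => infDist_nonneg)
      fun ε hε => (hE ε hε).mono fun n h => Real.iSup_le (fun x => Real.iSup_le (h x) hε.le) hε.le,
    tendsto_zero_of_nonneg_of_eventually_le (fun _ => hausdorffDist_nonneg)
      fun ε hε => ((hE ε hε).and (hF ε hε)).mono fun n h =>
        hausdorffDist_le_of_infDist hε.le h.1 h.2⟩

/-- L¹ convergence plus uniform density estimates imply Hausdorff convergence. -/
theorem hausdorff_convergence_of_L1_and_density (R : ℝ) (hR : 0 < R)
    (E : ℕ → Set E2) (F : Set E2)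
    (hEmeas : ∀ n, MeasurableSet (E n)) (hFmeas : MeasurableSet F)
    (hEbd : ∀ n, E n ⊆ closedBall 0 R) (hFbd : F ⊆ closedBall 0 R)
    (hL1 : Filter.Tendsto (fun n => volume (symmDiff (E n) F)) Filter.atTop (nhds 0))
    (C r₀ : ℝ) (hC : 0 < C) (hr₀ : 0 < r₀)
    (hdensE : ∀ n, DensityEstimates (E n) C r₀) (hdensF : DensityEstimates F C r₀) :
    Filter.Tendsto (fun n => ⨆ x ∈ E n, infDist x F) Filter.atTop (nhds 0) ∧
    Filter.Tendsto (fun n => hausdorffDist (E n) F) Filter.atTop (nhds 0) :=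
  hausdorff_convergence_of_L1_and_density_general E F hL1 C r₀ hC hr₀ hdensE hdensF

end
end
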